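/- Let n ≥ 1 and write 2n×2n complex matrices in 2×2 block form with n×n blocks. For every g ∈ GL(n,ℂ): w₂ₙ * ((g, 0; 0, g)ᵀ)⁻¹ * w₂ₙ⁻¹ = (h, 0; 0, h), where h = wₙ * (gᵀ)⁻¹ * wₙ⁻¹. -/
import Mathlib

open Matrix

/-- The `n × n` complex antidiagonal sign matrix `wₙ` of equation (5.2). -/
noncomputable def w (n : ℕ) : Matrix (Fin n) (Fin n) ℂ :=
  Matrix.of fun i j => if (i : ℕ) + (j : ℕ) + 1 = n then (-1 : ℂ) ^ (i : ℕ) else 0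

/-- The order-preserving identification of `Fin n ⊕ Fin n` with `Fin (2 * n)`. -/
def esum (n : ℕ) : (Fin n ⊕ Fin n) ≃ Fin (2 * n) :=
  finSumFinEquiv.trans (finCongr (two_mul n).symm)

/-- `w (2*n)` transported to 2×2 block form with `n × n` blocks. -/
noncomputable def wb (n : ℕ) : Matrix (Fin n ⊕ Fin n) (Fin n ⊕ Fin n) ℂ :=
  Matrix.reindex (esum n).symm (esum n).symm (w (2 * n))

lemma ww (n : ℕ) (hn : 1 ≤ n) : w n * w n = ((-1 : ℂ) ^ (n - 1)) • 1 := by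
  ext i k
  have hi := i.isLt
  have hk := k.isLt
  simp only [w, Matrix.mul_apply, Matrix.of_apply, ite_mul, zero_mul, mul_ite, mul_zero,
    Matrix.smul_apply, Matrix.one_apply, smul_eq_mul]
  have hj0 : n - 1 - (i : ℕ) < n := by omega
  rw [Finset.sum_eq_single (⟨n - 1 - i, hj0⟩ : Fin n)]
  · have h1 : (i : ℕ) + (n - 1 - i) + 1 = n := by omega
    simp only [h1, if_true]
    by_cases hik : (i : ℕ) = (k : ℕ)
    · have : i = k := Fin.ext hik
      subst this
      have h2 : (n - 1 - (i:ℕ)) + (i : ℕ) + 1 = n := by omega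
      rw [if_pos h2, if_pos rfl, ← pow_add, mul_one]
      congr 1
      show (i : ℕ) + (n - 1 - (i : ℕ)) = n - 1
      omega
    · have : i ≠ k := fun h => hik (by rw [h])
      rw [if_neg (by omega : ¬ (n - 1 - (i:ℕ)) + (k : ℕ) + 1 = n), if_neg this]
  · intro j _ hj
    have hjlt := j.isLt
    have hA : ¬ ((i : ℕ) + (j : ℕ) + 1 = n) := by
      intro h
      exact hj (Fin.ext (show (j : ℕ) = n - 1 - (i : ℕ) by omega))
    rw [if_neg hA, ite_self]
  · intro h
    exact absurd (Finset.mem_univ _) h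

lemma w_mul_w_inv (n : ℕ) (hn : 1 ≤ n) : w n * (w n)⁻¹ = 1 := by
  have h : w n * ((-1 : ℂ) ^ (n - 1) • w n) = 1 := by
    rw [Matrix.mul_smul, ww n hn, smul_smul, ← pow_add, ← two_mul, pow_mul]
    norm_num
  rw [Matrix.inv_eq_right_inv h, h]

lemma w_inv_eq (n : ℕ) (hn : 1 ≤ n) : (w n)⁻¹ = (-1 : ℂ) ^ (n - 1) • w n := by
  apply Matrix.inv_eq_right_inv
  rw [Matrix.mul_smul, ww n hn, smul_smul, ← pow_add, ← two_mul, pow_mul]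
  norm_num

lemma wb_eq (n : ℕ) : wb n = Matrix.fromBlocks 0 (w n) ((-1 : ℂ) ^ n • w n) 0 := by
  ext i j
  cases i with
  | inl i =>
    cases j with
    | inl j =>
      simp only [wb, Matrix.reindex_apply, Matrix.submatrix_apply, Equiv.symm_symm, esum,
        Equiv.trans_apply, finSumFinEquiv_apply_left, finCongr_apply, w, Matrix.of_apply,
        Fin.coe_cast, Fin.coe_castAdd, Matrix.fromBlocks_apply₁₁, Matrix.zero_apply]
      rw [if_neg (by omega)]
    | inr j =>
      simp only [wb, Matrix.reindex_apply, Matrix.submatrix_apply, Equiv.symm_symm, esum,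
        Equiv.trans_apply, finSumFinEquiv_apply_left, finSumFinEquiv_apply_right, finCongr_apply,
        w, Matrix.of_apply, Fin.coe_cast, Fin.coe_castAdd, Fin.coe_natAdd,
        Matrix.fromBlocks_apply₁₂]
      congr 1
      · simp only [eq_iff_iff]; omega
  | inr i =>
    cases j with
    | inl j =>
      simp only [wb, Matrix.reindex_apply, Matrix.submatrix_apply, Equiv.symm_symm, esum,
        Equiv.trans_apply, finSumFinEquiv_apply_left, finSumFinEquiv_apply_right, finCongr_apply,
        w, Matrix.of_apply, Fin.coe_cast, Fin.coe_castAdd, Fin.coe_natAdd,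
        Matrix.fromBlocks_apply₂₁, Matrix.smul_apply, smul_eq_mul]
      by_cases h : (i : ℕ) + (j : ℕ) + 1 = n
      · rw [if_pos (by omega), if_pos h, pow_add]
      · rw [if_neg (by omega), if_neg h, mul_zero]
    | inr j =>
      simp only [wb, Matrix.reindex_apply, Matrix.submatrix_apply, Equiv.symm_symm, esum,
        Equiv.trans_apply, finSumFinEquiv_apply_right, finCongr_apply, w, Matrix.of_apply,
        Fin.coe_cast, Fin.coe_natAdd, Matrix.fromBlocks_apply₂₂, Matrix.zero_apply]
      rw [if_neg (by omega)]

theorem stmt6 (n : ℕ) (hn : 1 ≤ n) (g : Matrix (Fin n) (Fin n) ℂ) (hg : IsUnit g) :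
    wb n * ((Matrix.fromBlocks g 0 0 g)ᵀ)⁻¹ * (wb n)⁻¹
      = Matrix.fromBlocks (w n * (gᵀ)⁻¹ * (w n)⁻¹) 0 0 (w n * (gᵀ)⁻¹ * (w n)⁻¹) := by
  have hgt : IsUnit gᵀ.det := by
    rw [Matrix.det_transpose]; exact (Matrix.isUnit_iff_isUnit_det g).mp hg
  have hgt1 : gᵀ * (gᵀ)⁻¹ = 1 := Matrix.mul_nonsing_inv _ hgt
  -- inverse of the block diagonal
  have hbd : ((Matrix.fromBlocks g 0 0 g)ᵀ)⁻¹
      = Matrix.fromBlocks (gᵀ)⁻¹ 0 0 (gᵀ)⁻¹ := by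
    rw [Matrix.fromBlocks_transpose]
    apply Matrix.inv_eq_right_inv
    rw [Matrix.fromBlocks_multiply]
    simp [hgt1, Matrix.fromBlocks_one]
  -- inverse of wb
  have hwinv := w_mul_w_inv n hn
  have hcn : ((-1 : ℂ) ^ n • w n) * (((-1:ℂ) ^ n)⁻¹ • (w n)⁻¹) = 1 := by
    rw [Matrix.smul_mul, Matrix.mul_smul, smul_smul, hwinv]
    have : ((-1 : ℂ) ^ n) * ((-1:ℂ) ^ n)⁻¹ = 1 := by
      exact mul_inv_cancel₀ (pow_ne_zero _ (by norm_num))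
    rw [this, one_smul]
  have hwb : (wb n)⁻¹ = Matrix.fromBlocks 0 (((-1:ℂ) ^ n)⁻¹ • (w n)⁻¹) (w n)⁻¹ 0 := by
    apply Matrix.inv_eq_right_inv
    rw [wb_eq, Matrix.fromBlocks_multiply]
    simp only [Matrix.mul_zero, Matrix.zero_mul, add_zero, zero_add, hwinv, hcn]
    exact Matrix.fromBlocks_one
  rw [hbd, hwb, wb_eq, Matrix.fromBlocks_multiply, Matrix.fromBlocks_multiply]
  simp only [Matrix.mul_zero, Matrix.zero_mul, add_zero, zero_add]
  have hne : ((-1 : ℂ) ^ n) ≠ 0 := pow_ne_zero _ (by norm_num)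
  rw [Matrix.smul_mul, Matrix.smul_mul, Matrix.mul_smul, smul_smul,
    mul_inv_cancel₀ hne, one_smul]
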